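/- For an elementary cube of a discrete torsal line system in ℝP^3, the i-th focal quadrilateral (f^i, f^i_j, f^i_{jk}, f^i_k) is planar if and only if the four focal planes of direction j (the planes l∨l_j, l_i∨l_{ij}, l_k∨l_{jk}, l_{ik}∨l_{ijk}) have a common point. -/
import Mathlib


/-!
STATEMENT 6: for an elementary cube of a discrete torsal line system in `ℝP³`,
the `i`-th focal quadrilateral `(f^i, f^i_j, f^i_{jk}, f^i_k)` is planar iff
the four focal planes of direction `j` (the planes `l∨l_j`, `l_i∨l_{ij}`,
`l_k∨l_{jk}`, `l_{ik}∨l_{ijk}`) have a common point.  (Formalized for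
`i = 1`, `j = 2`, `k = 3`.)

`ℝP³` is modelled by linear subspaces of `ℝ⁴`: lines = rank-2 subspaces,
focal points = meets of adjacent lines, focal planes = joins of lines adjacent
in direction `j`.  "Have a common point" means the meet of the four planes is
nonzero.
-/

open Submodule

abbrev V4 := Fin 4 → ℝ

def IsLine (L : Submodule ℝ V4) : Prop := Module.finrank ℝ L = 2

def Planar4 (a b c d : Submodule ℝ V4) : Prop :=
  Module.finrank ℝ ↥(a ⊔ b ⊔ c ⊔ d) ≤ 3

lemma finrank_V4 : Module.finrank ℝ V4 = 4 := by simp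

/-- intersection of two distinct intersecting lines has rank 1 -/
lemma inf_rank_one {L L' : Submodule ℝ V4} (hL : IsLine L) (hL' : IsLine L')
    (hmeet : L ⊓ L' ≠ ⊥) (hne : L ≠ L') : Module.finrank ℝ ↥(L ⊓ L') = 1 := by
  have h1 : 1 ≤ Module.finrank ℝ ↥(L ⊓ L') := by
    rw [Nat.one_le_iff_ne_zero]
    intro h0
    exact hmeet (Submodule.finrank_eq_zero.mp h0)
  have h2 : Module.finrank ℝ ↥(L ⊓ L') ≤ 2 := by
    have h := Submodule.finrank_mono (inf_le_left : L ⊓ L' ≤ L)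
    have hL2 : Module.finrank ℝ ↥L = 2 := hL
    omega
  have h3 : Module.finrank ℝ ↥(L ⊓ L') ≠ 2 := by
    intro h2'
    have hEq : L ⊓ L' = L := Submodule.eq_of_le_of_finrank_le inf_le_left (by rw [h2', hL])
    have hle : L ≤ L' := by rw [← hEq]; exact inf_le_right
    exact hne (Submodule.eq_of_le_of_finrank_le hle (by rw [hL, hL']))
  omega

/-- join of two distinct intersecting lines has rank 3 -/
lemma sup_rank_three {L L' : Submodule ℝ V4} (hL : IsLine L) (hL' : IsLine L')
    (hmeet : L ⊓ L' ≠ ⊥) (hne : L ≠ L') : Module.finrank ℝ ↥(L ⊔ L') = 3 := by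
  have h := Submodule.finrank_sup_add_finrank_inf_eq L L'
  rw [inf_rank_one hL hL' hmeet hne, hL, hL'] at h
  omega

/-- join of two skew lines has rank 4 -/
lemma sup_rank_four {L L' : Submodule ℝ V4} (hL : IsLine L) (hL' : IsLine L')
    (hskew : L ⊓ L' = ⊥) : Module.finrank ℝ ↥(L ⊔ L') = 4 := by
  have h := Submodule.finrank_sup_add_finrank_inf_eq L L'
  rw [hskew, finrank_bot, hL, hL'] at h
  omega

/-- the meet of the two focal planes of a face equals the join of the two
opposite focal points of that face, and it has rank 2. -/
lemma face_meet_eq {La Lb Lc Ld : Submodule ℝ V4}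
    (ha : IsLine La) (hb : IsLine Lb) (hc : IsLine Lc) (hd : IsLine Ld)
    (hab : La ⊓ Lb ≠ ⊥) (hcd : Lc ⊓ Ld ≠ ⊥) (hac : La ⊓ Lc ≠ ⊥) (hbd : Lb ⊓ Ld ≠ ⊥)
    (had : La ⊓ Ld = ⊥) (hbc : Lb ⊓ Lc = ⊥) :
    (La ⊔ Lc) ⊓ (Lb ⊔ Ld) = (La ⊓ Lb) ⊔ (Lc ⊓ Ld) ∧
      Module.finrank ℝ ↥((La ⊔ Lc) ⊓ (Lb ⊔ Ld)) = 2 := by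
  have hneab : La ≠ Lb := by
    intro h; rw [h] at hac; exact hac hbc
  have hnecd : Lc ≠ Ld := by
    intro h; rw [h] at hac; exact hac had
  have hneac : La ≠ Lc := by
    intro h; rw [h] at hab; exact hab (by rw [inf_comm]; exact hbc)
  have hnebd : Lb ≠ Ld := by
    intro h; rw [h] at hab; exact hab had
  -- the two focal planes
  have hP : Module.finrank ℝ ↥(La ⊔ Lc) = 3 := sup_rank_three ha hc hac hneac
  have hQ : Module.finrank ℝ ↥(Lb ⊔ Ld) = 3 := sup_rank_three hb hd hbd hnebd
  -- their join is everything
  have hPQ : Module.finrank ℝ ↥((La ⊔ Lc) ⊔ (Lb ⊔ Ld)) = 4 := by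
    have hle : La ⊔ Ld ≤ (La ⊔ Lc) ⊔ (Lb ⊔ Ld) :=
      sup_le (le_sup_of_le_left le_sup_left) (le_sup_of_le_right le_sup_right)
    have h4 : Module.finrank ℝ ↥(La ⊔ Ld) = 4 := sup_rank_four ha hd had
    have hge := Submodule.finrank_mono hle
    have hle4 : Module.finrank ℝ ↥((La ⊔ Lc) ⊔ (Lb ⊔ Ld)) ≤ 4 := by
      have := Submodule.finrank_le ((La ⊔ Lc) ⊔ (Lb ⊔ Ld))
      rwa [finrank_V4] at this
    omega
  -- so the meet of the planes has rank 2
  have hmeet2 : Module.finrank ℝ ↥((La ⊔ Lc) ⊓ (Lb ⊔ Ld)) = 2 := by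
    have h := Submodule.finrank_sup_add_finrank_inf_eq (La ⊔ Lc) (Lb ⊔ Ld)
    rw [hPQ, hP, hQ] at h; omega
  -- the join of the two focal points has rank 2
  have hptbot : (La ⊓ Lb) ⊓ (Lc ⊓ Ld) = ⊥ := by
    rw [← le_bot_iff, ← had]
    exact inf_le_inf inf_le_left inf_le_right
  have hpts : Module.finrank ℝ ↥((La ⊓ Lb) ⊔ (Lc ⊓ Ld)) = 2 := by
    have h := Submodule.finrank_sup_add_finrank_inf_eq (La ⊓ Lb) (Lc ⊓ Ld)
    rw [hptbot, finrank_bot, inf_rank_one ha hb hab hneab,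
      inf_rank_one hc hd hcd hnecd] at h
    omega
  -- and it sits inside the meet of the planes
  have hsub : (La ⊓ Lb) ⊔ (Lc ⊓ Ld) ≤ (La ⊔ Lc) ⊓ (Lb ⊔ Ld) := by
    refine sup_le (le_inf ?_ ?_) (le_inf ?_ ?_)
    · exact inf_le_left.trans le_sup_left
    · exact inf_le_right.trans le_sup_left
    · exact inf_le_left.trans le_sup_right
    · exact inf_le_right.trans le_sup_right
  have heq : (La ⊓ Lb) ⊔ (Lc ⊓ Ld) = (La ⊔ Lc) ⊓ (Lb ⊔ Ld) :=
    Submodule.eq_of_le_of_finrank_le hsub (by omega)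
  exact ⟨heq.symm, hmeet2⟩

theorem focal_quad_planar_iff_focal_planes_concurrent
    (L0 L1 L2 L3 L12 L13 L23 L123 : Submodule ℝ V4)
    (h0 : IsLine L0) (h1 : IsLine L1) (h2 : IsLine L2) (h3 : IsLine L3)
    (h12 : IsLine L12) (h13 : IsLine L13) (h23 : IsLine L23) (h123 : IsLine L123)
    -- adjacent lines intersect (the 12 edges of the cube)
    (a01 : L0 ⊓ L1 ≠ ⊥) (a02 : L0 ⊓ L2 ≠ ⊥) (a03 : L0 ⊓ L3 ≠ ⊥)
    (a112 : L1 ⊓ L12 ≠ ⊥) (a113 : L1 ⊓ L13 ≠ ⊥)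
    (a212 : L2 ⊓ L12 ≠ ⊥) (a223 : L2 ⊓ L23 ≠ ⊥)
    (a313 : L3 ⊓ L13 ≠ ⊥) (a323 : L3 ⊓ L23 ≠ ⊥)
    (a12123 : L12 ⊓ L123 ≠ ⊥) (a13123 : L13 ⊓ L123 ≠ ⊥) (a23123 : L23 ⊓ L123 ≠ ⊥)
    -- opposite lines of each face are skew (the 12 face diagonals)
    (s1 : L0 ⊓ L12 = ⊥) (s2 : L1 ⊓ L2 = ⊥)
    (s3 : L0 ⊓ L13 = ⊥) (s4 : L1 ⊓ L3 = ⊥)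
    (s5 : L0 ⊓ L23 = ⊥) (s6 : L2 ⊓ L3 = ⊥)
    (s7 : L1 ⊓ L123 = ⊥) (s8 : L12 ⊓ L13 = ⊥)
    (s9 : L2 ⊓ L123 = ⊥) (s10 : L12 ⊓ L23 = ⊥)
    (s11 : L3 ⊓ L123 = ⊥) (s12 : L13 ⊓ L23 = ⊥) :
    (Planar4 (L0 ⊓ L1) (L2 ⊓ L12) (L23 ⊓ L123) (L3 ⊓ L13) ↔
      (L0 ⊔ L2) ⊓ (L1 ⊔ L12) ⊓ (L3 ⊔ L23) ⊓ (L13 ⊔ L123) ≠ ⊥) := by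
  -- face (L0, L1, L2, L12): focal planes L0⊔L2 and L1⊔L12
  obtain ⟨hAeq, hA2⟩ := face_meet_eq h0 h1 h2 h12 a01 a212 a02 a112 s1 s2
  -- face (L3, L13, L23, L123): focal planes L3⊔L23 and L13⊔L123
  obtain ⟨hBeq, hB2⟩ := face_meet_eq h3 h13 h23 h123 a313 a23123 a323 a13123 s11 s12
  set A := (L0 ⊔ L2) ⊓ (L1 ⊔ L12) with hA
  set B := (L3 ⊔ L23) ⊓ (L13 ⊔ L123) with hB
  have hJ : (L0 ⊓ L1) ⊔ (L2 ⊓ L12) ⊔ (L23 ⊓ L123) ⊔ (L3 ⊓ L13) = A ⊔ B := by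
    rw [sup_assoc, hAeq, hBeq]
    congr 1
    exact sup_comm _ _
  have hRHS : (L0 ⊔ L2) ⊓ (L1 ⊔ L12) ⊓ (L3 ⊔ L23) ⊓ (L13 ⊔ L123) = A ⊓ B := by
    rw [hA, hB, inf_assoc]
  have hdim := Submodule.finrank_sup_add_finrank_inf_eq A B
  rw [hA2, hB2] at hdim
  have hle4 : Module.finrank ℝ ↥(A ⊔ B) ≤ 4 := by
    have := Submodule.finrank_le (A ⊔ B)
    rwa [finrank_V4] at this
  rw [Planar4, hJ, hRHS]
  constructor
  · intro hpl hbot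
    rw [hbot, finrank_bot] at hdim
    omega
  · intro hne
    have h1' : 1 ≤ Module.finrank ℝ ↥(A ⊓ B) := by
      rw [Nat.one_le_iff_ne_zero]
      intro h0'
      exact hne (Submodule.finrank_eq_zero.mp h0')
    omega
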